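/- arXiv:2412.04328 — 4 statements merged into one kernel-verified Lean document; each statement's English description precedes it below -/
import Mathlib

section
/- Let g(z) = z(exp(z) − 1)/(exp(z) − z − 1) for z > 0. Then g(z) → 2 as z → 0+, g(z) → ∞ as z → ∞, and for every real r > 0 there exists exactly one z > 0 such that g(z) = 2 + r. -/
open Real Filter Set Topology

/-!
The derivative of `g` has the sign of `(exp z - 1)² - z² exp z = exp z ((2 sinh (z/2))² - z²)`,
which is positive since `|sinh x| > |x|` for `x ≠ 0`; so `g` is strictly increasing on `(0, ∞)`.
Since `g z ≥ z` and `g z → 2` as `z → 0⁺`, the intermediate value theorem shows that `g` maps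
`(0, ∞)` onto `(2, ∞)`, bijectively by monotonicity.
-/

noncomputable def karpSipserG (z : ℝ) : ℝ := z * (exp z - 1) / (exp z - z - 1)

lemma exp_sub_self_sub_one_pos {z : ℝ} (hz : z ≠ 0) : 0 < exp z - z - 1 := by
  linarith [add_one_lt_exp hz]

lemma exp_mul_two_sinh_half_sq (z : ℝ) : exp z * (2 * sinh (z / 2)) ^ 2 = (exp z - 1) ^ 2 := by
  have h : exp (z / 2) * exp (z / 2) = exp z := by rw [← exp_add, add_halves]
  have h' : exp (z / 2) * exp (-(z / 2)) = 1 := by rw [← exp_add, add_neg_cancel, exp_zero]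
  rw [sinh_eq, ← h]
  linear_combination (exp (z / 2) * exp (-(z / 2)) + 1 - 2 * exp (z / 2) * exp (z / 2)) * h'

lemma sq_mul_exp_lt_sq_exp_sub_one {z : ℝ} (hz : z ≠ 0) : z ^ 2 * exp z < (exp z - 1) ^ 2 := by
  have hsinh : |z / 2| < |sinh (z / 2)| := by
    rw [abs_sinh]
    exact self_lt_sinh_iff.2 (abs_pos.2 (div_ne_zero hz two_ne_zero))
  have hsq : z ^ 2 < (2 * sinh (z / 2)) ^ 2 := by
    rw [sq_lt_sq, abs_mul, abs_two]
    rw [abs_div, abs_two] at hsinh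
    linarith
  rw [← exp_mul_two_sinh_half_sq, mul_comm]
  exact mul_lt_mul_of_pos_left hsq (exp_pos z)

lemma hasDerivAt_karpSipserG {z : ℝ} (hz : z ≠ 0) :
    HasDerivAt karpSipserG (((exp z - 1) ^ 2 - z ^ 2 * exp z) / (exp z - z - 1) ^ 2) z := by
  have hnum : HasDerivAt (fun x => x * (exp x - 1)) (1 * (exp z - 1) + z * exp z) z :=
    (hasDerivAt_id' z).mul ((hasDerivAt_exp z).sub_const 1)
  have hden : HasDerivAt (fun x => exp x - x - 1) (exp z - 1) z :=
    ((hasDerivAt_exp z).sub (hasDerivAt_id' z)).sub_const 1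
  exact (hnum.div hden (exp_sub_self_sub_one_pos hz).ne').congr_deriv (by ring)

lemma strictMonoOn_karpSipserG : StrictMonoOn karpSipserG (Ioi 0) := by
  refine strictMonoOn_of_deriv_pos (convex_Ioi 0)
    (fun z hz => (hasDerivAt_karpSipserG (ne_of_gt hz)).continuousAt.continuousWithinAt)
    fun z hz => ?_
  rw [interior_Ioi] at hz
  have hz : z ≠ 0 := ne_of_gt hz
  rw [(hasDerivAt_karpSipserG hz).deriv]
  exact div_pos (sub_pos.2 (sq_mul_exp_lt_sq_exp_sub_one hz))
    (pow_pos (exp_sub_self_sub_one_pos hz) 2)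

/- Numerator and denominator vanish to second order at `0`, so L'Hôpital's rule is applied
twice. -/
lemma tendsto_karpSipserG_nhdsNE : Tendsto karpSipserG (𝓝[≠] 0) (𝓝 2) := by
  have hcont : ∀ f : ℝ → ℝ, Continuous f → Tendsto f (𝓝[≠] 0) (𝓝 (f 0)) :=
    fun _ hf => hf.continuousAt.tendsto.mono_left nhdsWithin_le_nhds
  have hzero : ∀ f : ℝ → ℝ, Continuous f → f 0 = 0 → Tendsto f (𝓝[≠] 0) (𝓝 0) :=
    fun f hf hf0 => by simpa only [hf0] using hcont f hf
  have hratio : Tendsto (fun z => (2 * exp z + z * exp z) / exp z) (𝓝[≠] 0) (𝓝 2) := by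
    simpa using hcont _ (by fun_prop (disch := exact fun z => exp_ne_zero z) :
      Continuous fun z => (2 * exp z + z * exp z) / exp z)
  refine HasDerivAt.lhopital_zero_nhdsNE (f' := fun z => 1 * (exp z - 1) + z * exp z)
    (g' := fun z => exp z - 1)
    (.of_forall fun z => (hasDerivAt_id' z).mul ((hasDerivAt_exp z).sub_const 1))
    (.of_forall fun z => ((hasDerivAt_exp z).sub (hasDerivAt_id' z)).sub_const 1)
    (eventually_nhdsWithin_of_forall fun z hz => sub_ne_zero.2 (mt (exp_eq_one_iff z).1 hz))
    (hzero _ (by fun_prop) (by simp)) (hzero _ (by fun_prop) (by simp)) ?_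
  refine HasDerivAt.lhopital_zero_nhdsNE (.of_forall fun z => ?_)
    (.of_forall fun z => (hasDerivAt_exp z).sub_const 1) (.of_forall fun z => exp_ne_zero z)
    (hzero _ (by fun_prop) (by simp)) (hzero _ (by fun_prop) (by simp)) hratio
  exact (((hasDerivAt_exp z).sub_const 1).const_mul 1).add
    ((hasDerivAt_id' z).mul (hasDerivAt_exp z)) |>.congr_deriv (by ring)

lemma self_le_karpSipserG {z : ℝ} (hz : 0 < z) : z ≤ karpSipserG z := by
  rw [karpSipserG, le_div_iff₀ (exp_sub_self_sub_one_pos hz.ne')]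
  nlinarith

lemma tendsto_karpSipserG_atTop : Tendsto karpSipserG atTop atTop :=
  tendsto_atTop_mono' _ ((eventually_gt_atTop 0).mono fun _ => self_le_karpSipserG) tendsto_id

lemma Ioi_two_subset_image_karpSipserG : Ioi 2 ⊆ karpSipserG '' Ioi 0 :=
  isPreconnected_Ioi.intermediate_value_Ioi (l₁ := 𝓝[>] 0) inf_le_right
    (le_principal_iff.2 (Ioi_mem_atTop 0))
    (fun _ hz => (hasDerivAt_karpSipserG (ne_of_gt hz)).continuousAt.continuousWithinAt)
    (tendsto_karpSipserG_nhdsNE.mono_left (nhdsGT_le_nhdsNE 0)) tendsto_karpSipserG_atTop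

/-- For `g z = z (exp z - 1) / (exp z - z - 1)` on `(0, ∞)`:
`g z → 2` as `z → 0⁺`, `g z → ∞` as `z → ∞`, and for every `r > 0` there is exactly
one `z > 0` with `g z = 2 + r`. -/
theorem karpSipser_g_limits_and_unique_solution :
    Filter.Tendsto (fun z : ℝ => z * (Real.exp z - 1) / (Real.exp z - z - 1))
      (𝓝[>] (0 : ℝ)) (𝓝 2) ∧
    Filter.Tendsto (fun z : ℝ => z * (Real.exp z - 1) / (Real.exp z - z - 1))
      Filter.atTop Filter.atTop ∧
    ∀ r : ℝ, 0 < r →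
      ∃! z : ℝ, 0 < z ∧ z * (Real.exp z - 1) / (Real.exp z - z - 1) = 2 + r := by
  refine ⟨tendsto_karpSipserG_nhdsNE.mono_left (nhdsGT_le_nhdsNE 0), tendsto_karpSipserG_atTop,
    fun r hr => ?_⟩
  obtain ⟨z, hz, hgz⟩ := Ioi_two_subset_image_karpSipserG (by simpa using hr : 2 + r ∈ Ioi 2)
  exact ⟨z, ⟨hz, hgz⟩, fun y hy => strictMonoOn_karpSipserG.injOn hy.1 hz (hy.2.trans hgz.symm)⟩
end

section
/- Define z(β) = e·β + log β and 𝒱(β) = β·exp(−z(β))·(exp(z(β)) − z(β) − 1) for β > 0. Then 𝒱(e^{−1}) = 0, the first derivative of 𝒱 at β = e^{−1} is 0, the second derivative of 𝒱 at β = e^{−1} equals 4e, and the third derivative of 𝒱 at β = e^{−1} equals −10e². -/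
/-!
For `β > 0` one has `β * exp (-z β) = exp (-(e * β))`, so `𝒱 β = β - (z β + 1) * exp (-(e * β))`
near `e⁻¹`. The Leibniz rule, with `(exp (-(e * β)))⁽ʲ⁾ = (-e) ^ j * exp (-(e * β))`, reduces the
derivatives of `𝒱` to those of `z + 1 = e * β + log β + 1`, which at `β = e⁻¹` are `1, 2e, -e², 2e³`;
the binomial sums `∑ (n choose i) (-e) ^ (n - i) (z + 1)⁽ⁱ⁾` are then `e, -4e², 10e³` for `n = 1, 2, 3`,
and `exp (-(e * e⁻¹)) = e⁻¹`.
-/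

open Real Filter Topology Finset
open scoped Nat

-- No hypothesis on `x`: `deriv log = Inv.inv` holds everywhere with the junk values at `0`.
theorem Real.iteratedDeriv_succ_log (k : ℕ) (x : ℝ) :
    iteratedDeriv (k + 1) log x = (-1) ^ k * k ! * x ^ (-1 - k : ℤ) := by
  rw [iteratedDeriv_succ', deriv_log', iteratedDeriv_eq_iterate, iter_deriv_inv]

theorem iteratedDeriv_succ_mul_add_log_add (a b : ℝ) {x : ℝ} (hx : x ≠ 0) (k : ℕ) :
    iteratedDeriv (k + 1) (fun β => a * β + log β + b) x =
      (if k = 0 then a else 0) + (-1) ^ k * k ! * x ^ (-1 - k : ℤ) := by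
  have hlog : ContDiffAt ℝ (k + 1) log x := contDiffAt_log.2 hx
  rw [iteratedDeriv_fun_add (by fun_prop) contDiffAt_const,
    iteratedDeriv_fun_add (by fun_prop) hlog, iteratedDeriv_const_mul_field, iteratedDeriv_fun_id,
    iteratedDeriv_const, Real.iteratedDeriv_succ_log]
  simp

theorem iteratedDeriv_mul_exp_const_mul {q : ℝ → ℝ} {n : ℕ} {x : ℝ} (c : ℝ)
    (hq : ContDiffAt ℝ n q x) :
    iteratedDeriv n (fun β => q β * exp (c * β)) x =
      (∑ i ∈ range (n + 1), n.choose i * c ^ (n - i) * iteratedDeriv i q x) * exp (c * x) := by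
  have hexp : ContDiffAt ℝ n (fun β => exp (c * β)) x := by fun_prop
  simp only [iteratedDeriv_fun_mul hq hexp, iteratedDeriv_exp_const_mul, sum_mul]
  refine sum_congr rfl fun i _ => ?_
  ring

theorem iteratedDeriv_sub_mul_exp_neg_mul {q : ℝ → ℝ} {n : ℕ} {x : ℝ} (a : ℝ)
    (hq : ContDiffAt ℝ n q x) :
    iteratedDeriv n (fun β => β - q β * exp (-a * β)) x =
      iteratedDeriv n (fun β => β) x -
        (∑ i ∈ range (n + 1), n.choose i * (-a) ^ (n - i) * iteratedDeriv i q x) * exp (-a * x) := by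
  rw [iteratedDeriv_fun_sub (by fun_prop) (hq.mul (by fun_prop)),
    iteratedDeriv_mul_exp_const_mul _ hq]

theorem mul_exp_neg_add_log_mul_exp_sub_sub_one (a : ℝ) {β : ℝ} (hβ : 0 < β) :
    β * exp (-(a * β + log β)) * (exp (a * β + log β) - (a * β + log β) - 1) =
      β - (a * β + log β + 1) * exp (-a * β) := by
  have hcancel : β * exp (-(a * β + log β)) = exp (-a * β) := by
    rw [neg_add, exp_add, exp_neg (log β), exp_log hβ, neg_mul]
    field_simp
  have hinv : exp (-(a * β + log β)) * exp (a * β + log β) = 1 := by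
    rw [← exp_add, neg_add_cancel, exp_zero]
  rw [← hcancel]
  linear_combination β * hinv

/-- With `z β = e β + log β` and
`𝒱 β = β exp(-z β) (exp (z β) - z β - 1)`, one has `𝒱 e⁻¹ = 0`, `𝒱' e⁻¹ = 0`,
`𝒱'' e⁻¹ = 4 e` and `𝒱''' e⁻¹ = -10 e²`. -/
theorem karpSipser_fluid_vertices_derivatives (z 𝒱 : ℝ → ℝ)
    (hz : ∀ β : ℝ, z β = Real.exp 1 * β + Real.log β)
    (hV : ∀ β : ℝ, 𝒱 β = β * Real.exp (-(z β)) * (Real.exp (z β) - z β - 1)) :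
    𝒱 (Real.exp 1)⁻¹ = 0 ∧
    deriv 𝒱 (Real.exp 1)⁻¹ = 0 ∧
    iteratedDeriv 2 𝒱 (Real.exp 1)⁻¹ = 4 * Real.exp 1 ∧
    iteratedDeriv 3 𝒱 (Real.exp 1)⁻¹ = -(10 * (Real.exp 1) ^ 2) := by
  set e := exp 1 with he
  have he0 : e ≠ 0 := exp_ne_zero 1
  have hx : 0 < e⁻¹ := inv_pos.2 (exp_pos 1)
  have hlocal : 𝒱 =ᶠ[𝓝 e⁻¹] fun β => β - (e * β + log β + 1) * exp (-e * β) := by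
    filter_upwards [eventually_gt_nhds hx] with β hβ
    rw [hV, hz, mul_exp_neg_add_log_mul_exp_sub_sub_one e hβ]
  have hp : ∀ n : ℕ, ContDiffAt ℝ n (fun β => e * β + log β + 1) e⁻¹ := fun n =>
    ((contDiffAt_const.mul contDiffAt_fun_id).add (contDiffAt_log.2 hx.ne')).add contDiffAt_const
  have hexp : exp (-e * e⁻¹) = e⁻¹ := by rw [neg_mul, mul_inv_cancel₀ he0, exp_neg]
  have hlog : log e⁻¹ = -1 := by rw [log_inv, he, log_exp]
  have hderiv : ∀ n, iteratedDeriv n 𝒱 e⁻¹ = _ := fun n =>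
    (hlocal.iteratedDeriv_eq n).trans (iteratedDeriv_sub_mul_exp_neg_mul e (hp n))
  rw [← iteratedDeriv_one, ← congrFun (iteratedDeriv_zero (f := 𝒱))]
  simp only [hderiv, hexp, sum_range_succ, sum_range_zero, iteratedDeriv_zero,
    iteratedDeriv_succ_mul_add_log_add _ _ hx.ne', iteratedDeriv_fun_id]
  norm_num [hlog, he0]
  constructor <;> field_simp <;> ring
end

section
/- Define z(β) = e·β + log β and 𝒮(β) = β·(z(β) + z(β)·exp(−z(β)) + 2·exp(−z(β)) − 2) for β > 0. Then 𝒮(e^{−1}) = 0, the first and second derivatives of 𝒮 at β = e^{−1} both vanish, and the third derivative of 𝒮 at β = e^{−1} equals 8e². -/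
/-!
Write `𝒮 β = β φ(z β)` with `φ u = u + u e⁻ᵘ + 2 e⁻ᵘ - 2`. Since `φ u = u³/6 + O(u⁴)` and
`z e⁻¹ = 0`, the composite `φ ∘ z` is flat to second order at `e⁻¹`, so by the Leibniz and
chain rules the only surviving term of `𝒮'''(e⁻¹)` is `e⁻¹ φ'''(0) z'(e⁻¹)³ = e⁻¹ (2e)³ = 8e²`.
-/

open Real Set

theorem Set.EqOn.iteratedDeriv_succ_of_hasDerivAt {𝕜 F : Type*} [NontriviallyNormedField 𝕜]
    [NormedAddCommGroup F] [NormedSpace 𝕜 F] {f g g' : 𝕜 → F} {s : Set 𝕜} {n : ℕ}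
    (hs : IsOpen s) (hf : EqOn (iteratedDeriv n f) g s) (hg : ∀ x ∈ s, HasDerivAt g (g' x) x) :
    EqOn (iteratedDeriv (n + 1) f) g' s := fun x hx => by
  rw [iteratedDeriv_succ,
    ((hg x hx).congr_of_eventuallyEq (hf.eventuallyEq_of_mem (hs.mem_nhds hx))).deriv]

section ChainRule

variable {g₁ g₂ g₃ h h₁ h₂ h₃ : ℝ → ℝ} {x : ℝ}

theorem hasDerivAt_comp_mul_deriv (hg₁ : HasDerivAt g₁ (g₂ (h x)) (h x))
    (hh : HasDerivAt h (h₁ x) x) (hh₁ : HasDerivAt h₁ (h₂ x) x) :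
    HasDerivAt (fun y => g₁ (h y) * h₁ y) (g₂ (h x) * h₁ x ^ 2 + g₁ (h x) * h₂ x) x :=
  ((hg₁.comp x hh).mul hh₁).congr_deriv (by
    simp only [Function.comp_apply]
    ring)

theorem hasDerivAt_comp_second_deriv (hg₁ : HasDerivAt g₁ (g₂ (h x)) (h x))
    (hg₂ : HasDerivAt g₂ (g₃ (h x)) (h x)) (hh : HasDerivAt h (h₁ x) x)
    (hh₁ : HasDerivAt h₁ (h₂ x) x) (hh₂ : HasDerivAt h₂ (h₃ x) x) :
    HasDerivAt (fun y => g₂ (h y) * h₁ y ^ 2 + g₁ (h y) * h₂ y)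
      (g₃ (h x) * h₁ x ^ 3 + 3 * g₂ (h x) * h₁ x * h₂ x + g₁ (h x) * h₃ x) x :=
  (((hg₂.comp x hh).mul (hh₁.pow 2)).add ((hg₁.comp x hh).mul hh₂)).congr_deriv (by
    simp only [Function.comp_apply, Pi.pow_apply]
    ring)

end ChainRule

theorem iteratedDeriv_id_mul_comp_of_flat {s : Set ℝ} (hs : IsOpen s)
    {g g₁ g₂ g₃ h h₁ h₂ h₃ : ℝ → ℝ}
    (hg : ∀ u, HasDerivAt g (g₁ u) u) (hg₁ : ∀ u, HasDerivAt g₁ (g₂ u) u)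
    (hg₂ : ∀ u, HasDerivAt g₂ (g₃ u) u)
    (hh : ∀ x ∈ s, HasDerivAt h (h₁ x) x) (hh₁ : ∀ x ∈ s, HasDerivAt h₁ (h₂ x) x)
    (hh₂ : ∀ x ∈ s, HasDerivAt h₂ (h₃ x) x)
    {x₀ : ℝ} (hx₀ : x₀ ∈ s) (hg0 : g (h x₀) = 0) (hg₁0 : g₁ (h x₀) = 0) (hg₂0 : g₂ (h x₀) = 0) :
    x₀ * g (h x₀) = 0 ∧ deriv (fun x => x * g (h x)) x₀ = 0 ∧
      iteratedDeriv 2 (fun x => x * g (h x)) x₀ = 0 ∧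
      iteratedDeriv 3 (fun x => x * g (h x)) x₀ = x₀ * g₃ (h x₀) * h₁ x₀ ^ 3 := by
  set f := fun x => x * g (h x)
  have d₀ : EqOn (iteratedDeriv 0 f) f s := by
    rw [iteratedDeriv_zero]
    exact eqOn_refl f s
  have d₁ : EqOn (iteratedDeriv 1 f) (fun x => g (h x) + x * (g₁ (h x) * h₁ x)) s :=
    d₀.iteratedDeriv_succ_of_hasDerivAt hs fun x hx =>
      ((hasDerivAt_id x).mul ((hg _).comp x (hh x hx))).congr_deriv (by simp)
  have d₂ : EqOn (iteratedDeriv 2 f)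
      (fun x => 2 * (g₁ (h x) * h₁ x) + x * (g₂ (h x) * h₁ x ^ 2 + g₁ (h x) * h₂ x)) s :=
    d₁.iteratedDeriv_succ_of_hasDerivAt hs fun x hx =>
      (((hg _).comp x (hh x hx)).add ((hasDerivAt_id x).mul
        (hasDerivAt_comp_mul_deriv (hg₁ _) (hh x hx) (hh₁ x hx)))).congr_deriv (by
          simp only [id]
          ring)
  have d₃ : EqOn (iteratedDeriv 3 f) (fun x => 3 * (g₂ (h x) * h₁ x ^ 2 + g₁ (h x) * h₂ x) +
      x * (g₃ (h x) * h₁ x ^ 3 + 3 * g₂ (h x) * h₁ x * h₂ x + g₁ (h x) * h₃ x)) s :=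
    d₂.iteratedDeriv_succ_of_hasDerivAt hs fun x hx =>
      (((hasDerivAt_comp_mul_deriv (hg₁ _) (hh x hx) (hh₁ x hx)).const_mul 2).add
        ((hasDerivAt_id x).mul (hasDerivAt_comp_second_deriv (hg₁ _) (hg₂ _) (hh x hx)
          (hh₁ x hx) (hh₂ x hx)))).congr_deriv (by
            simp only [id]
            ring)
  refine ⟨by simp [hg0], ?_, ?_, ?_⟩
  · rw [← iteratedDeriv_one, d₁ hx₀]
    simp [hg0, hg₁0]
  · rw [d₂ hx₀]
    simp [hg₁0, hg₂0]
  · rw [d₃ hx₀]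
    simp only [hg₁0, hg₂0]
    ring

noncomputable def surplusFactor (u : ℝ) : ℝ := u + u * exp (-u) + 2 * exp (-u) - 2

theorem hasDerivAt_surplusFactor (u : ℝ) :
    HasDerivAt surplusFactor (1 - (u + 1) * exp (-u)) u := by
  have hE := (hasDerivAt_neg' u).exp
  exact ((((hasDerivAt_id' u).add ((hasDerivAt_id' u).mul hE)).add (hE.const_mul 2)).sub_const
    2).congr_deriv (by ring)

theorem hasDerivAt_one_sub_add_one_mul_exp_neg (u : ℝ) :
    HasDerivAt (fun v => 1 - (v + 1) * exp (-v)) (u * exp (-u)) u :=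
  ((((hasDerivAt_id' u).add_const 1).mul (hasDerivAt_neg' u).exp).const_sub 1).congr_deriv
    (by ring)

theorem hasDerivAt_mul_exp_neg (u : ℝ) :
    HasDerivAt (fun v => v * exp (-v)) ((1 - u) * exp (-u)) u :=
  ((hasDerivAt_id' u).mul (hasDerivAt_neg' u).exp).congr_deriv (by ring)

theorem hasDerivAt_const_mul_add_log (c : ℝ) {x : ℝ} (hx : x ≠ 0) :
    HasDerivAt (fun y => c * y + log y) (c + x⁻¹) x :=
  (((hasDerivAt_id' x).const_mul c).add (hasDerivAt_log hx)).congr_deriv (by ring)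

theorem hasDerivAt_neg_inv_sq {x : ℝ} (hx : x ≠ 0) :
    HasDerivAt (fun y => -(y ^ 2)⁻¹) (2 * (x ^ 3)⁻¹) x :=
  ((hasDerivAt_pow 2 x).inv (pow_ne_zero 2 hx)).neg.congr_deriv (by
    field_simp
    ring)

/-- With `z β = e β + log β` and
`𝒮 β = β (z β + z β exp(-z β) + 2 exp(-z β) - 2)`, one has `𝒮 e⁻¹ = 0`, the first and
second derivatives of `𝒮` vanish at `β = e⁻¹`, and `𝒮''' e⁻¹ = 8 e²`. -/
theorem karpSipser_fluid_surplus_derivatives (z 𝒮 : ℝ → ℝ)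
    (hz : ∀ β : ℝ, z β = Real.exp 1 * β + Real.log β)
    (hS : ∀ β : ℝ, 𝒮 β =
      β * (z β + z β * Real.exp (-(z β)) + 2 * Real.exp (-(z β)) - 2)) :
    𝒮 (Real.exp 1)⁻¹ = 0 ∧
    deriv 𝒮 (Real.exp 1)⁻¹ = 0 ∧
    iteratedDeriv 2 𝒮 (Real.exp 1)⁻¹ = 0 ∧
    iteratedDeriv 3 𝒮 (Real.exp 1)⁻¹ = 8 * (Real.exp 1) ^ 2 := by
  obtain rfl : z = fun β => exp 1 * β + log β := funext hz
  obtain rfl : 𝒮 = fun β => β * surplusFactor (exp 1 * β + log β) := funext hS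
  have hz₀ : exp 1 * (exp 1)⁻¹ + log (exp 1)⁻¹ = 0 := by
    rw [log_inv, log_exp, mul_inv_cancel₀ (exp_ne_zero 1), add_neg_cancel]
  obtain ⟨h₀, h₁, h₂, h₃⟩ := iteratedDeriv_id_mul_comp_of_flat isOpen_compl_singleton
    hasDerivAt_surplusFactor hasDerivAt_one_sub_add_one_mul_exp_neg hasDerivAt_mul_exp_neg
    (fun x hx => hasDerivAt_const_mul_add_log (exp 1) hx)
    (fun x hx => (hasDerivAt_inv hx).const_add (exp 1)) (fun x hx => hasDerivAt_neg_inv_sq hx)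
    (inv_ne_zero (exp_ne_zero 1)) (by rw [hz₀]; simp [surplusFactor]) (by rw [hz₀]; simp)
    (by rw [hz₀]; simp)
  refine ⟨h₀, h₁, h₂, ?_⟩
  rw [h₃, hz₀, inv_inv, neg_zero, exp_zero, sub_zero, mul_one, mul_one]
  field_simp
  ring
end

section
/- For ε > 0, let β(ε) denote the unique β > e^{−1} with 1 − β − (1/(2e))·(log β)² = 1 − 3/(2e) − ε; set z(β) = e·β + log β and 𝒳(β) = e^{−1}·z(β)² − z(β)·β·(1 − exp(−z(β))). Then 𝒳(β(ε)) ∼ (e/3)·ε² as ε → 0+, i.e. 𝒳(β(ε))/((e/3)·ε²) → 1. -/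
/-!
In the variable `u = e β - 1` one has `log β = log (1 + u) - 1`; the defining equation of `β(ε)`
becomes `2 e ε = 2 (u - log (1 + u)) + log (1 + u) ^ 2`, and `𝒳 β` collapses to
`e⁻¹ z (exp (-u) - 1 + log (1 + u))` with `z = u + log (1 + u)`. So `𝒳 (β ε) / ((e/3) ε²)` is
an explicit function of `u` alone. Taylor expansion to third order gives `z ~ 2u`,
`exp (-u) - 1 + log (1 + u) ~ u³/6` and `2 e ε ~ 2u²`, so the ratio tends to
`12 · 2 · (1/6) / 4 = 1`. Finally `u(ε) → 0⁺` because `log (1 + u) ^ 2 ≤ 2 e ε`.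
-/

open Real Filter Set Topology

noncomputable def zOf (β : ℝ) : ℝ := Real.exp 1 * β + Real.log β

noncomputable def XFluid (β : ℝ) : ℝ :=
  (Real.exp 1)⁻¹ * (zOf β) ^ 2 - zOf β * β * (1 - Real.exp (-(zOf β)))

open Asymptotics Finset

theorem tendsto_exp_sub_sum_range_div_pow (n : ℕ) :
    Tendsto (fun x => (exp x - ∑ m ∈ range n, x ^ m / m.factorial) / x ^ n) (𝓝[≠] 0)
      (𝓝 (1 / n.factorial)) := by
  rw [← tendsto_sub_nhds_zero_iff]
  refine IsBigO.trans_tendsto (g'' := id) ?_ (tendsto_id.mono_left nhdsWithin_le_nhds)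
  refine IsBigO.of_bound ((n + 2) / ((n + 1).factorial * (n + 1))) ?_
  have hI : Icc (-1 : ℝ) 1 ∈ 𝓝 0 := Icc_mem_nhds (by norm_num) one_pos
  filter_upwards [self_mem_nhdsWithin, nhdsWithin_le_nhds hI] with x (hx0 : x ≠ 0) hx1
  have hrem := Real.exp_bound (abs_le.2 hx1) (n := n + 1) n.succ_pos
  rw [sum_range_succ] at hrem
  have hsplit : (exp x - ∑ m ∈ range n, x ^ m / m.factorial) / x ^ n - 1 / n.factorial
      = (exp x - (∑ m ∈ range n, x ^ m / m.factorial + x ^ n / n.factorial)) / x ^ n := by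
    field_simp
    ring
  rw [hsplit, Real.norm_eq_abs, abs_div, abs_pow, div_le_iff₀ (pow_pos (abs_pos.2 hx0) _), id,
    Real.norm_eq_abs]
  calc _ ≤ |x| ^ (n + 1) * ((n + 1).succ / ((n + 1).factorial * (n + 1) : ℝ)) := by
        exact_mod_cast hrem
    _ = _ := by push_cast; ring

theorem tendsto_log_one_add_add_sum_range_div_pow (n : ℕ) :
    Tendsto (fun x => (log (1 + x) + ∑ i ∈ range n, (-x) ^ (i + 1) / (i + 1)) / x ^ (n + 1))
      (𝓝[≠] 0) (𝓝 ((-1) ^ n / (n + 1))) := by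
  rw [← tendsto_sub_nhds_zero_iff]
  refine IsBigO.trans_tendsto (g'' := id) ?_ (tendsto_id.mono_left nhdsWithin_le_nhds)
  refine IsBigO.of_bound 2 ?_
  have hI : Icc (-(1 / 2) : ℝ) (1 / 2) ∈ 𝓝 0 := Icc_mem_nhds (by norm_num) (by norm_num)
  filter_upwards [self_mem_nhdsWithin, nhdsWithin_le_nhds hI] with x (hx0 : x ≠ 0) hx1
  have hx : |x| ≤ 1 / 2 := abs_le.2 hx1
  have hrem := Real.abs_log_sub_add_sum_range_le (x := -x) (by rw [abs_neg]; linarith) (n + 1)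
  rw [sum_range_succ, sub_neg_eq_add, abs_neg] at hrem
  set S := ∑ i ∈ range n, (-x) ^ (i + 1) / ((i : ℝ) + 1)
  have hsplit : (log (1 + x) + S) / x ^ (n + 1) - (-1) ^ n / (n + 1)
      = (S + (-x) ^ (n + 1) / (n + 1) + log (1 + x)) / x ^ (n + 1) := by
    rw [neg_pow x, pow_succ (-1 : ℝ)]
    field_simp
    ring
  rw [hsplit, Real.norm_eq_abs, abs_div, abs_pow, div_le_iff₀ (pow_pos (abs_pos.2 hx0) _), id,
    Real.norm_eq_abs]
  calc _ ≤ |x| ^ (n + 1 + 1) / (1 - |x|) := by exact_mod_cast hrem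
    _ ≤ |x| ^ (n + 1 + 1) * 2 := by
        rw [div_le_iff₀ (by linarith)]
        nlinarith [pow_nonneg (abs_nonneg x) (n + 1 + 1)]
    _ = 2 * |x| * |x| ^ (n + 1) := by ring

noncomputable def extinctionGap (u : ℝ) : ℝ := 2 * (u - log (1 + u)) + log (1 + u) ^ 2

noncomputable def leafRatio (u : ℝ) : ℝ :=
  12 * (u + log (1 + u)) * (exp (-u) - 1 + log (1 + u)) / extinctionGap u ^ 2

theorem tendsto_leafRatio : Tendsto leafRatio (𝓝[≠] 0) (𝓝 1) := by
  have ha : Tendsto (fun u => log (1 + u) / u) (𝓝[≠] 0) (𝓝 1) := by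
    convert tendsto_log_one_add_add_sum_range_div_pow 0 using 2 <;> simp
  have hb : Tendsto (fun u => (log (1 + u) - u) / u ^ 2) (𝓝[≠] 0) (𝓝 (-1 / 2)) := by
    convert tendsto_log_one_add_add_sum_range_div_pow 1 using 2 <;> norm_num [sub_eq_add_neg]
  have hc : Tendsto (fun u => (log (1 + u) - u + u ^ 2 / 2) / u ^ 3) (𝓝[≠] 0)
      (𝓝 (1 / 3)) := by
    convert tendsto_log_one_add_add_sum_range_div_pow 2 using 2
    · simp only [sum_range_succ, range_one, sum_singleton, zero_add, pow_one, CharP.cast_eq_zero,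
        div_one, Nat.reduceAdd, even_two, Even.neg_pow, Nat.cast_one]
      ring
    · norm_num
  have hneg : Tendsto (fun u : ℝ => -u) (𝓝[≠] 0) (𝓝[≠] 0) :=
    tendsto_nhdsWithin_of_tendsto_nhds_of_eventually_within _
      (by simpa using (continuous_neg.tendsto (0 : ℝ)).mono_left nhdsWithin_le_nhds)
      (eventually_mem_nhdsWithin.mono fun _ hu => neg_ne_zero.2 hu)
  have hd : Tendsto (fun u => (exp (-u) - (1 - u + u ^ 2 / 2)) / (-u) ^ 3) (𝓝[≠] 0)
      (𝓝 (1 / 6)) := by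
    convert (tendsto_exp_sub_sum_range_div_pow 3).comp hneg using 2
    · simp only [sum_range_succ, range_one, sum_singleton, pow_zero, Nat.factorial_zero,
        Nat.cast_one, div_one, pow_one, Nat.factorial_one, Nat.factorial_two, Nat.cast_ofNat,
        Function.comp_apply, even_two, Even.neg_pow]
      ring
    · norm_num [Nat.factorial]
  have hlim := (((ha.const_add 1).mul (hc.sub hd)).const_mul 12).div
    (((ha.pow 2).sub (hb.const_mul 2)).pow 2) (by norm_num)
  norm_num at hlim
  refine hlim.congr' ?_
  filter_upwards [self_mem_nhdsWithin] with u (hu : u ≠ 0)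
  rw [Pi.div_apply, leafRatio, extinctionGap]
  field_simp
  ring

theorem log_one_add_exp_one_mul_sub_one {β : ℝ} (hβ : 0 < β) :
    log (1 + (exp 1 * β - 1)) = 1 + log β := by
  rw [add_sub_cancel, log_mul (exp_ne_zero 1) hβ.ne', log_exp]

theorem XFluid_eq {β : ℝ} (hβ : 0 < β) :
    XFluid β = zOf β * (exp (1 - exp 1 * β) + log β) / exp 1 := by
  have hexp : exp (-zOf β) = exp (1 - exp 1 * β) / (exp 1 * β) := by
    rw [zOf, neg_add, exp_add, exp_neg (log β), exp_log hβ, sub_eq_add_neg, exp_add]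
    field_simp
  rw [XFluid, hexp]
  field_simp
  rw [zOf]
  ring

theorem two_mul_exp_one_mul_eq_extinctionGap {β ε : ℝ} (hβ : 0 < β)
    (h : 1 - β - 1 / (2 * exp 1) * log β ^ 2 = 1 - 3 / (2 * exp 1) - ε) :
    2 * exp 1 * ε = extinctionGap (exp 1 * β - 1) := by
  rw [extinctionGap, log_one_add_exp_one_mul_sub_one hβ]
  field_simp at h
  linarith

theorem XFluid_div_eq_leafRatio {β ε : ℝ} (hβ : 0 < β)
    (h : 1 - β - 1 / (2 * exp 1) * log β ^ 2 = 1 - 3 / (2 * exp 1) - ε) :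
    XFluid β / (exp 1 / 3 * ε ^ 2) = leafRatio (exp 1 * β - 1) := by
  rw [XFluid_eq hβ, leafRatio, ← two_mul_exp_one_mul_eq_extinctionGap hβ h,
    log_one_add_exp_one_mul_sub_one hβ, neg_sub, zOf]
  field_simp
  ring

theorem tendsto_exp_one_mul_sub_one_nhdsGT (B : ℝ → ℝ)
    (hB : ∀ ε : ℝ, 0 < ε →
      (Real.exp 1)⁻¹ < B ε ∧
        1 - B ε - 1 / (2 * Real.exp 1) * (Real.log (B ε)) ^ 2
          = 1 - 3 / (2 * Real.exp 1) - ε) :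
    Tendsto (fun ε => exp 1 * B ε - 1) (𝓝[>] 0) (𝓝[>] 0) := by
  have hgt : ∀ ε > 0, 1 < exp 1 * B ε := fun ε hε =>
    (inv_lt_iff_one_lt_mul₀' (exp_pos 1)).1 (hB ε hε).1
  have hpos : ∀ ε > 0, 0 < B ε := fun ε hε =>
    (inv_pos.2 (exp_pos 1)).trans (hB ε hε).1
  have hsq : ∀ ε > 0, log (exp 1 * B ε) ^ 2 ≤ 2 * exp 1 * ε := fun ε hε => by
    rw [two_mul_exp_one_mul_eq_extinctionGap (hpos ε hε) (hB ε hε).2, extinctionGap,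
      add_sub_cancel]
    nlinarith [log_le_sub_one_of_pos (one_pos.trans (hgt ε hε))]
  have hlog : Tendsto (fun ε => log (exp 1 * B ε)) (𝓝[>] 0) (𝓝 0) := by
    refine squeeze_zero_norm' ?_ (?_ : Tendsto (fun ε => √(2 * exp 1 * ε)) _ _)
    · filter_upwards [self_mem_nhdsWithin] with ε hε
      exact abs_le_sqrt (hsq ε hε)
    · simpa using ((continuous_const.mul continuous_id).sqrt.tendsto 0).mono_left
        nhdsWithin_le_nhds
  have hexp : Tendsto (fun ε => exp (log (exp 1 * B ε)) - 1) (𝓝[>] 0) (𝓝 0) := by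
    simpa using ((continuous_exp.tendsto 0).comp hlog).sub_const 1
  refine tendsto_nhdsWithin_iff.2 ⟨hexp.congr' ?_, ?_⟩ <;>
    filter_upwards [self_mem_nhdsWithin] with ε hε
  · rw [exp_log (one_pos.trans (hgt ε hε))]
  · exact sub_pos.2 (hgt ε hε)

/-- For `ε > 0` let `B ε` be the unique `β > e⁻¹` with
`1 - β - (1/(2e)) (log β)² = 1 - 3/(2e) - ε`. With `z β = e β + log β` and
`𝒳 β = e⁻¹ z(β)² - z(β) β (1 - exp(-z β))`, one has `𝒳 (B ε) ∼ (e/3) ε²` as `ε → 0⁺`. -/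
theorem karpSipser_leaves_asymptotic_at_extinction (B : ℝ → ℝ)
    (hB : ∀ ε : ℝ, 0 < ε →
      (Real.exp 1)⁻¹ < B ε ∧
        1 - B ε - 1 / (2 * Real.exp 1) * (Real.log (B ε)) ^ 2
          = 1 - 3 / (2 * Real.exp 1) - ε) :
    Filter.Tendsto (fun ε : ℝ => XFluid (B ε) / (Real.exp 1 / 3 * ε ^ 2))
      (𝓝[>] (0 : ℝ)) (𝓝 1) := by
  have hu := (tendsto_exp_one_mul_sub_one_nhdsGT B hB).mono_right (nhdsGT_le_nhdsNE 0)
  refine (tendsto_leafRatio.comp hu).congr' ?_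
  filter_upwards [self_mem_nhdsWithin] with ε hε
  exact (XFluid_div_eq_leafRatio ((inv_pos.2 (exp_pos 1)).trans (hB ε hε).1) (hB ε hε).2).symm
end
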